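/- arXiv:1910.01534 — 2 statements merged into one kernel-verified Lean document; each statement's English description precedes it below -/
import Mathlib

section
/- For every integer k ≥ 1, the integer 4k divides 1 - (1-2k)^k + 2k^2. Consequently the Euler characteristic χ(k) = (1 - (1-2k)^k + 2k^2)/(2k) is an even integer. -/
/-! Modulo `(2k)^2 = 4k · k`, the binomial expansion gives `(1 - 2k)^k ≡ 1 - 2k^2`, so the
numerator is `≡ 4k^2 ≡ 0`. -/

theorem chi_even_general (k : ℕ) :
    (4 * (k : ℤ)) ∣ (1 - (1 - 2 * (k : ℤ)) ^ k + 2 * (k : ℤ) ^ 2) := by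
  have h_sq : 4 * (k : ℤ) ∣ (-2 * k) ^ 2 := ⟨k, by ring⟩
  have h_binom := h_sq.trans (sq_dvd_add_pow_sub_sub (-2 * (k : ℤ)) 1 k)
  have h_eq : 1 - (1 - 2 * (k : ℤ)) ^ k + 2 * (k : ℤ) ^ 2
      = 4 * k * k - ((1 + -2 * k) ^ k - 1 ^ (k - 1) * (-2 * k) * k - 1 ^ k) := by
    simp only [one_pow]
    ring
  rw [h_eq]
  exact (dvd_mul_right _ _).sub h_binom

theorem chi_even (k : ℕ) (hk : 1 ≤ k) :
    (4 * (k : ℤ)) ∣ (1 - (1 - 2 * (k : ℤ)) ^ k + 2 * (k : ℤ) ^ 2) :=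
  chi_even_general k
end

section
/- In the formal power series ring ℚ[[J]], the coefficient of J^{k-1} in the series (1+J)^k · (1+kJ) · (1+2kJ)^{-1} equals (1 - (1-2k)^k + 2k^2)/(4k), for every integer k ≥ 1. -/
/-!
Since `1 + kJ = ½ (1 + 2kJ) + ½`, the series equals `½ (1+J)^k + ½ (1+J)^k (1+2kJ)⁻¹`.
The first summand contributes `½ binom(k, k-1) = k/2`. With `a = 2k`, the second contributes
`½ Σ_{i<k} binom(k,i) (-a)^(k-1-i)`, and multiplying this sum by `-a` gives the binomial expansion
of `(1-a)^k` without its last term `1`.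
-/

open PowerSeries Finset

theorem one_add_pow_succ_eq_one_add_mul_sum {R : Type*} [CommSemiring R] (b : R) (k : ℕ) :
    (1 + b) ^ (k + 1) = 1 + b * ∑ i ∈ range (k + 1), ((k + 1).choose i : R) * b ^ (k - i) := by
  rw [add_pow, sum_range_succ, mul_sum, add_comm]
  congr 1
  · simp
  · refine sum_congr rfl fun i hi => ?_
    rw [Nat.succ_sub (mem_range_succ_iff.mp hi), pow_succ]
    ring

namespace PowerSeries

theorem coeff_one_add_X_pow {R : Type*} [Semiring R] (n k : ℕ) :
    coeff k ((1 + X : R⟦X⟧) ^ n) = n.choose k := by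
  rw [show (1 + X : R⟦X⟧) ^ n = ((1 + Polynomial.X) ^ n : Polynomial R) by push_cast; rfl,
    Polynomial.coeff_coe, Polynomial.coeff_one_add_X_pow]

theorem mk_neg_pow_mul_one_add_C_mul_X {R : Type*} [CommRing R] (a : R) :
    (mk fun n => (-a) ^ n) * (1 + C a * X) = 1 := by
  have h := congrArg (rescale (-a)) (mk_one_mul_one_sub_eq_one R)
  rw [map_mul, map_sub, map_one, rescale_X, map_neg, neg_mul, sub_neg_eq_add] at h
  convert h using 2
  ext n
  simp

theorem inv_one_add_C_mul_X {K : Type*} [Field K] (a : K) :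
    (1 + C a * X)⁻¹ = mk fun n => (-a) ^ n :=
  (inv_eq_iff_mul_eq_one (by simp)).mpr (mk_neg_pow_mul_one_add_C_mul_X a)

theorem mul_coeff_one_add_X_pow_succ_mul_inv {K : Type*} [Field K] (a : K) (k : ℕ) :
    a * coeff k ((1 + X) ^ (k + 1) * (1 + C a * X)⁻¹) = 1 - (1 - a) ^ (k + 1) := by
  rw [inv_one_add_C_mul_X, coeff_mul,
    Nat.sum_antidiagonal_eq_sum_range_succ (fun i j => coeff i ((1 + X) ^ (k + 1)) * coeff j _)]
  simp only [coeff_one_add_X_pow, coeff_mk]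
  linear_combination one_add_pow_succ_eq_one_add_mul_sum (-a) k

end PowerSeries

theorem chern_class_coeff (k : ℕ) (hk : 1 ≤ k) :
    PowerSeries.coeff (R := ℚ) (k - 1)
      ((1 + PowerSeries.X) ^ k * (1 + PowerSeries.C (R := ℚ) (k : ℚ) * PowerSeries.X) *
        (1 + PowerSeries.C (R := ℚ) (2 * (k : ℚ)) * PowerSeries.X)⁻¹) =
      (1 - (1 - 2 * (k : ℚ)) ^ k + 2 * (k : ℚ) ^ 2) / (4 * (k : ℚ)) := by
  obtain ⟨n, rfl⟩ := Nat.exists_eq_add_of_le' hk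
  set c : ℚ := ((n + 1 : ℕ) : ℚ)
  have hsplit : 1 + C c * X = C (1 / 2) * (1 + C (2 * c) * X) + C (1 / 2) := by
    rw [mul_add, mul_one, ← mul_assoc, ← map_mul, add_right_comm, ← map_add, add_halves,
      map_one, one_div, inv_mul_cancel_left₀ two_ne_zero]
  have hcancel : (1 + C (2 * c) * X) * (1 + C (2 * c) * X)⁻¹ = 1 :=
    PowerSeries.mul_inv_cancel _ (by simp)
  have hdecomp : (1 + X) ^ (n + 1) * (1 + C c * X) * (1 + C (2 * c) * X)⁻¹ =
      C (1 / 2) * (1 + X) ^ (n + 1) + C (1 / 2) * ((1 + X) ^ (n + 1) * (1 + C (2 * c) * X)⁻¹) := by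
    rw [hsplit]
    linear_combination (C (1 / 2) * (1 + X) ^ (n + 1)) * hcancel
  have hc : c ≠ 0 := by positivity
  rw [Nat.add_sub_cancel, hdecomp, map_add, coeff_C_mul, coeff_C_mul, coeff_one_add_X_pow,
    Nat.choose_succ_self_right]
  have hsecond := mul_coeff_one_add_X_pow_succ_mul_inv (2 * c) n
  field_simp
  linear_combination 2 * hsecond
end
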